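/- Let G be a finitely generated group such that 1 is not in the roundness spectrum of G, i.e., for every finite symmetric generating set Σ of G (with identity ∉ Σ), the roundness of (G, d_Σ) is not equal to 1. Then G is a torsion group in which every non-identity element has order 2, 3, 5 or 7. -/

import Mathlib

/-- The set of exponents `q ≥ 1` for which the roundness inequality holds for all
quadruples of points, with respect to the distance function `d`. -/
noncomputable def roundnessSet {X : Type*} (d : X → X → ℝ) : Set ℝ :=
  {q : ℝ | 1 ≤ q ∧ ∀ x00 x01 x10 x11 : X,
    d x00 x11 ^ q + d x01 x10 ^ q ≤
      d x00 x01 ^ q + d x00 x10 ^ q + d x11 x01 ^ q + d x11 x10 ^ q}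

/-- The roundness of a distance function `d` on `X`: the supremum (in `EReal`) of all
exponents `q ≥ 1` for which the roundness inequality holds for all quadruples. -/
noncomputable def roundness {X : Type*} (d : X → X → ℝ) : EReal :=
  sSup ((fun q : ℝ => (q : EReal)) '' roundnessSet d)
/-- The word length of `g` with respect to a generating set `S`:
the least `n` such that `g` is a product of `n` elements of `S`. -/
noncomputable def wordLength {G : Type*} [Group G] (S : Set G) (g : G) : ℕ :=
  sInf {n : ℕ | ∃ l : List G, l.length = n ∧ (∀ x ∈ l, x ∈ S) ∧ l.prod = g}

/-- The word metric on a group `G` associated to a generating set `S`. -/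
noncomputable def wordDist {G : Type*} [Group G] (S : Set G) (g h : G) : ℝ :=
  wordLength S (g⁻¹ * h)


/-! If `g`, `g²`, `g³`, `g⁵` are all `≠ 1`, enlarge a finite generating set by `g^{±1}, g^{±3}`
after removing all other powers of `g`. In the resulting Cayley graph `1, g, g², g³` span a square
whose sides have length `1` and whose diagonals have length `2`, so the roundness inequality for
this quadruple reads `2 · 2^q ≤ 4`, forcing `q ≤ 1`; since `q = 1` is the triangle inequality,
the roundness is exactly `1`. -/

section Roundness

variable {X : Type*} (d : X → X → ℝ)

theorem one_mem_roundnessSet (hcomm : ∀ x y, d x y = d y x)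
    (htri : ∀ x y z, d x z ≤ d x y + d y z) : 1 ∈ roundnessSet d := by
  refine ⟨le_rfl, fun x00 x01 x10 x11 => ?_⟩
  simp only [Real.rpow_one]
  linarith [htri x00 x01 x11, htri x00 x10 x11, htri x01 x00 x10, htri x01 x11 x10,
    hcomm x01 x00, hcomm x01 x11, hcomm x10 x11]

theorem le_one_of_mem_roundnessSet_of_square {x00 x01 x10 x11 : X}
    (h0011 : d x00 x11 = 2) (h0110 : d x01 x10 = 2) (h0001 : d x00 x01 = 1)
    (h0010 : d x00 x10 = 1) (h1101 : d x11 x01 = 1) (h1110 : d x11 x10 = 1) {q : ℝ}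
    (hq : q ∈ roundnessSet d) : q ≤ 1 := by
  have hg2_lenuare := hq.2 x00 x01 x10 x11
  rw [h0011, h0110, h0001, h0010, h1101, h1110, Real.one_rpow] at hg2_lenuare
  have h2q : (2 : ℝ) ^ q ≤ 2 ^ (1 : ℝ) := by rw [Real.rpow_one]; linarith
  exact (Real.rpow_le_rpow_left_iff one_lt_two).mp h2q

theorem roundness_eq_one (h1 : 1 ∈ roundnessSet d) (hle : ∀ q ∈ roundnessSet d, q ≤ 1) :
    roundness d = 1 := by
  have hset : roundnessSet d = {1} :=
    Set.eq_singleton_iff_unique_mem.mpr ⟨h1, fun q hq => le_antisymm (hle q hq) hq.1⟩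
  rw [roundness, hset, Set.image_singleton, sSup_singleton, EReal.coe_one]

end Roundness

section WordMetric

variable {G : Type*} [Group G] {S : Set G}

theorem wordLength_le_length {x : G} {l : List G} (hl : ∀ y ∈ l, y ∈ S) (hx : l.prod = x) :
    wordLength S x ≤ l.length :=
  Nat.sInf_le ⟨l, rfl, hl, hx⟩

theorem exists_list_of_closure_eq_top (hsymm : ∀ s ∈ S, s⁻¹ ∈ S)
    (hgen : Subgroup.closure S = ⊤) (x : G) : ∃ l : List G, (∀ y ∈ l, y ∈ S) ∧ l.prod = x := by
  have hx : x ∈ Submonoid.closure (S ∪ S⁻¹) := by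
    rw [← Subgroup.closure_toSubmonoid, hgen]
    trivial
  obtain ⟨l, hl, hprod⟩ := Submonoid.exists_list_of_mem_closure hx
  refine ⟨l, fun y hy => ?_, hprod⟩
  rcases hl y hy with hyS | hyS
  · exact hyS
  · simpa using hsymm _ hyS

theorem exists_list_length_eq_wordLength (hsymm : ∀ s ∈ S, s⁻¹ ∈ S)
    (hgen : Subgroup.closure S = ⊤) (x : G) :
    ∃ l : List G, (∀ y ∈ l, y ∈ S) ∧ l.prod = x ∧ l.length = wordLength S x := by
  obtain ⟨l, hl, hprod⟩ := exists_list_of_closure_eq_top hsymm hgen x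
  obtain ⟨m, hlen, hm, hmprod⟩ := Nat.sInf_mem (s := {n : ℕ | ∃ l : List G, l.length = n ∧
    (∀ y ∈ l, y ∈ S) ∧ l.prod = x}) ⟨l.length, l, rfl, hl, hprod⟩
  exact ⟨m, hm, hmprod, hlen⟩

theorem wordLength_mul_le (hsymm : ∀ s ∈ S, s⁻¹ ∈ S) (hgen : Subgroup.closure S = ⊤)
    (x y : G) : wordLength S (x * y) ≤ wordLength S x + wordLength S y := by
  obtain ⟨l, hl, rfl, hllen⟩ := exists_list_length_eq_wordLength hsymm hgen x
  obtain ⟨m, hm, rfl, hmlen⟩ := exists_list_length_eq_wordLength hsymm hgen y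
  rw [← hllen, ← hmlen, ← List.length_append]
  exact wordLength_le_length (fun z hz => (List.mem_append.mp hz).elim (hl z) (hm z))
    List.prod_append

theorem wordLength_inv (hsymm : ∀ s ∈ S, s⁻¹ ∈ S) (x : G) :
    wordLength S x⁻¹ = wordLength S x := by
  have hinv : ∀ (y : G) (n : ℕ),
      (∃ l : List G, l.length = n ∧ (∀ z ∈ l, z ∈ S) ∧ l.prod = y) →
        ∃ l : List G, l.length = n ∧ (∀ z ∈ l, z ∈ S) ∧ l.prod = y⁻¹ := by
    rintro y n ⟨l, rfl, hl, rfl⟩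
    refine ⟨(l.map fun z => z⁻¹).reverse, by simp, ?_, (List.prod_inv_reverse l).symm⟩
    simp only [List.mem_reverse, List.mem_map]
    rintro _ ⟨z, hz, rfl⟩
    exact hsymm z (hl z hz)
  unfold wordLength
  congr 1
  ext n
  exact ⟨fun hn => by simpa using hinv _ n hn, hinv x n⟩

theorem eq_one_or_mem_of_wordLength_le_one (hsymm : ∀ s ∈ S, s⁻¹ ∈ S)
    (hgen : Subgroup.closure S = ⊤) {x : G} (hx : wordLength S x ≤ 1) : x = 1 ∨ x ∈ S := by
  obtain ⟨l, hl, rfl, hlen⟩ := exists_list_length_eq_wordLength hsymm hgen x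
  match l, hl, hlen with
  | [], _, _ => exact Or.inl List.prod_nil
  | [s], hs, _ => exact Or.inr (by simpa using hs)
  | _ :: _ :: _, _, hlen => simp only [List.length_cons] at hlen; omega

theorem wordLength_of_mem (hsymm : ∀ s ∈ S, s⁻¹ ∈ S) (hgen : Subgroup.closure S = ⊤)
    (h1 : (1 : G) ∉ S) {s : G} (hs : s ∈ S) : wordLength S s = 1 := by
  have hle : wordLength S s ≤ 1 := wordLength_le_length (l := [s]) (by simpa using hs) (by simp)
  obtain ⟨l, -, hprod, hlen⟩ := exists_list_length_eq_wordLength hsymm hgen s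
  have hne : wordLength S s ≠ 0 := fun h0 => by
    rw [h0, List.length_eq_zero_iff] at hlen
    subst hlen
    rw [List.prod_nil] at hprod
    exact h1 (hprod ▸ hs)
  omega

theorem wordLength_mul_of_mem (hsymm : ∀ s ∈ S, s⁻¹ ∈ S) (hgen : Subgroup.closure S = ⊤)
    {a b : G} (ha : a ∈ S) (hb : b ∈ S) (hab1 : a * b ≠ 1) (habS : a * b ∉ S) :
    wordLength S (a * b) = 2 := by
  have hle : wordLength S (a * b) ≤ 2 :=
    wordLength_le_length (l := [a, b]) (by simp [ha, hb]) (by simp)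
  have hgt : ¬wordLength S (a * b) ≤ 1 := fun h =>
    (eq_one_or_mem_of_wordLength_le_one hsymm hgen h).elim hab1 habS
  omega

theorem wordDist_comm (hsymm : ∀ s ∈ S, s⁻¹ ∈ S) (x y : G) : wordDist S x y = wordDist S y x := by
  rw [wordDist, wordDist, ← wordLength_inv hsymm, mul_inv_rev, inv_inv]

theorem wordDist_triangle (hsymm : ∀ s ∈ S, s⁻¹ ∈ S) (hgen : Subgroup.closure S = ⊤)
    (x y z : G) : wordDist S x z ≤ wordDist S x y + wordDist S y z := by
  have hxz : x⁻¹ * z = (x⁻¹ * y) * (y⁻¹ * z) := by group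
  rw [wordDist, wordDist, wordDist, hxz]
  exact_mod_cast wordLength_mul_le hsymm hgen _ _

theorem roundness_wordDist_eq_one_of_square (hsymm : ∀ s ∈ S, s⁻¹ ∈ S)
    (hgen : Subgroup.closure S = ⊤) (h1 : (1 : G) ∉ S) {g : G} (hg : g ∈ S) (hg3 : g ^ 3 ∈ S)
    (hg2 : g ^ 2 ∉ S) (hg2_ne : g ^ 2 ≠ 1) : roundness (wordDist S) = 1 := by
  have hdist : ∀ {x y z : G}, x⁻¹ * y = z → wordDist S x y = wordLength S z :=
    fun h => by rw [wordDist, h]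
  have hg2_len : wordLength S (g ^ 2) = 2 := by
    rw [pow_two] at hg2 hg2_ne ⊢
    exact wordLength_mul_of_mem hsymm hgen hg hg hg2_ne hg2
  have hg_len : wordLength S g = 1 := wordLength_of_mem hsymm hgen h1 hg
  refine roundness_eq_one _ (one_mem_roundnessSet _ (wordDist_comm hsymm)
    (wordDist_triangle hsymm hgen)) fun q hq =>
      le_one_of_mem_roundnessSet_of_square (x00 := 1) (x01 := g) (x10 := g ^ 3) (x11 := g ^ 2)
        _ ?_ ?_ ?_ ?_ ?_ ?_ hq
  · rw [hdist (show (1 : G)⁻¹ * g ^ 2 = g ^ 2 by group), hg2_len, Nat.cast_ofNat]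
  · rw [hdist (show g⁻¹ * g ^ 3 = g ^ 2 by group), hg2_len, Nat.cast_ofNat]
  · rw [hdist (show (1 : G)⁻¹ * g = g by group), hg_len, Nat.cast_one]
  · rw [hdist (show (1 : G)⁻¹ * g ^ 3 = g ^ 3 by group), wordLength_of_mem hsymm hgen h1 hg3,
      Nat.cast_one]
  · rw [hdist (show (g ^ 2)⁻¹ * g = g⁻¹ by group), wordLength_inv hsymm, hg_len, Nat.cast_one]
  · rw [hdist (show (g ^ 2)⁻¹ * g ^ 3 = g by group), hg_len, Nat.cast_one]

end WordMetric

section GeneratingSet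

variable {G : Type*} [Group G]

theorem inv_mem_union_inv (A : Set G) : ∀ s ∈ A ∪ A⁻¹, s⁻¹ ∈ A ∪ A⁻¹ := fun s hs => by
  simpa [or_comm] using hs

theorem inv_mem_sdiff_union {T P : Set G} (H : Subgroup G) (hT : ∀ s ∈ T, s⁻¹ ∈ T)
    (hP : ∀ s ∈ P, s⁻¹ ∈ P) : ∀ s ∈ T \ H ∪ P, s⁻¹ ∈ T \ H ∪ P := by
  rintro s (⟨hsT, hsH⟩ | hsP)
  · exact Or.inl ⟨hT s hsT, fun h => hsH (by simpa using H.inv_mem h)⟩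
  · exact Or.inr (hP s hsP)

theorem closure_sdiff_union_eq_top {T P : Set G} {H : Subgroup G}
    (hT : Subgroup.closure T = ⊤) (hP : H ≤ Subgroup.closure P) :
    Subgroup.closure (T \ H ∪ P) = ⊤ := by
  rw [eq_top_iff, ← hT, Subgroup.closure_le]
  intro t ht
  by_cases htH : t ∈ H
  · exact Subgroup.closure_mono Set.subset_union_right (hP htH)
  · exact Subgroup.subset_closure (Or.inl ⟨ht, htH⟩)

theorem exists_generating_set_with_square {T : Set G} (hT : Subgroup.closure T = ⊤)
    (hTfin : T.Finite) {g : G} (hg1 : g ≠ 1) (hg3 : g ^ 3 ≠ 1) (hg5 : g ^ 5 ≠ 1) :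
    ∃ S : Set G, S.Finite ∧ (∀ s ∈ S, s⁻¹ ∈ S) ∧ (1 : G) ∉ S ∧ Subgroup.closure S = ⊤ ∧
      g ∈ S ∧ g ^ 3 ∈ S ∧ g ^ 2 ∉ S := by
  set A : Set G := {g, g ^ 3}
  set S := (T ∪ T⁻¹) \ Subgroup.zpowers g ∪ (A ∪ A⁻¹)
  have hnot_mem : ∀ x ∈ Subgroup.zpowers g, x ∉ A ∪ A⁻¹ → x ∉ S :=
    fun x hx hxA hxS => hxS.elim (fun h => h.2 hx) hxA
  refine ⟨S, ?_, inv_mem_sdiff_union _ (inv_mem_union_inv T) (inv_mem_union_inv A),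
    hnot_mem 1 (Subgroup.one_mem _) ?_, closure_sdiff_union_eq_top ?_ ?_, ?_, ?_,
    hnot_mem _ (Subgroup.pow_mem _ (Subgroup.mem_zpowers g) 2) ?_⟩
  · exact ((hTfin.union hTfin.inv).sdiff).union ((Set.toFinite A).union (Set.toFinite A).inv)
  · simp [A, eq_comm (a := (1 : G)), hg1, hg3]
  · rw [Subgroup.closure_union, Subgroup.closure_inv, hT, top_sup_eq]
  · exact Subgroup.zpowers_le.mpr (Subgroup.subset_closure (by simp [A]))
  · simp [S, A]
  · simp [S, A]
  · simp only [A, Set.mem_union, Set.mem_insert_iff, Set.mem_singleton_iff, Set.mem_inv, not_or]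
    refine ⟨⟨?_, ?_⟩, ?_, ?_⟩ <;> intro h
    · exact hg1 (by simpa [pow_two] using h)
    · exact hg1 (by simpa [pow_succ] using h)
    · exact hg3 (by rw [pow_succ, ← mul_inv_cancel (g ^ 2), h])
    · exact hg5 (by rw [show 5 = 2 + 3 from rfl, pow_add, ← h, mul_inv_cancel])

end GeneratingSet

/-- If `G` is a finitely generated group such that no Cayley graph of `G` has roundness
equal to 1 (i.e. `1 ∉ ρ(G)`), then `G` is a torsion group in which every non-identity
element has order 2, 3, 5 or 7. -/
theorem torsion_of_one_not_mem_spectrum (G : Type*) [Group G] [Group.FG G]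
    (h : ∀ S : Set G, S.Finite → (∀ s ∈ S, s⁻¹ ∈ S) → (1 : G) ∉ S →
      Subgroup.closure S = ⊤ → roundness (wordDist S) ≠ (1 : EReal)) :
    ∀ g : G, g ≠ 1 → orderOf g ∈ ({2, 3, 5, 7} : Set ℕ) := by
  intro g hg1
  by_contra hord
  simp only [Set.mem_insert_iff, Set.mem_singleton_iff, not_or] at hord
  have hpow_ne : ∀ p : ℕ, p.Prime → orderOf g ≠ p → g ^ p ≠ 1 := fun p hp hne hgp =>
    hne (haveI := Fact.mk hp; orderOf_eq_prime hgp hg1)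
  obtain ⟨T, hT, hTfin⟩ := Group.fg_iff.mp ‹Group.FG G›
  obtain ⟨S, hSfin, hsymm, h1, hgen, hg, hg3, hg2⟩ := exists_generating_set_with_square hT hTfin
    hg1 (hpow_ne 3 Nat.prime_three hord.2.1) (hpow_ne 5 Nat.prime_five hord.2.2.1)
  exact h S hSfin hsymm h1 hgen <| roundness_wordDist_eq_one_of_square hsymm hgen h1 hg hg3 hg2
    (hpow_ne 2 Nat.prime_two hord.1)
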